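/- Define operators on the vector space with basis {x^{(β)} : β ∈ ℤ₊ⁿ} by: e_{s,j} x^{(β)} = q^{-Σ_{i: s<i<j} β_i}[β_s+1] x^{(β+ε_s−ε_j)} for 1 ≤ s < j ≤ n, e_{s,n+1} x^{(β)} = q^{-Σ_{i=s+1}^{n} β_i}[β_s+1](Σ_{i=1}^{n} θ(ε_i,β)[β_i]) x^{(β+ε_s)} for 1 ≤ s ≤ n. Then for 1 ≤ s < j ≤ n, the q-commutator identity e_{s,n+1} = e_{s,j} e_{j,n+1} − q e_{j,n+1} e_{s,j} holds as operators. -/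

import Mathlib

open Finset

/-- The quantum integer `[m] := (q^m - q^{-m})/(q - q^{-1})` for `m : ℤ`. -/
def qint {K : Type*} [Field K] (q : K) (m : ℤ) : K :=
  (q ^ m - q ^ (-m)) / (q - q⁻¹)

/-- `θ(ε_k, β) = q^{Σ_{s>k} β_s - Σ_{s<k} β_s}`. -/
def thq {K : Type*} [Field K] (q : K) (n : ℕ) (β : ℕ → ℤ) (k : ℕ) : K :=
  q ^ ((∑ s ∈ Finset.Icc (k + 1) n, β s) - ∑ s ∈ Finset.Ico 1 k, β s)

/-- The `i`-th standard basis vector `ε_i`. -/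
def eps (i : ℕ) : ℕ → ℤ := fun k => if k = i then 1 else 0

/-!
The θ-weighted sum `∑ θ(ε_i, β) [β_i]` telescopes, since `θ(ε_i, β) q^{±β_i}` are consecutive
values of `k ↦ q^{Σ_{i ≥ k} β_i - Σ_{i < k} β_i}`; it equals `[|β|]`, which is unchanged by
`β ↦ β + ε_s - ε_j`. Both compositions then send `x^{(β)}` to multiples of `x^{(β + ε_s)}`
whose coefficients differ only in the factors `[β_j + 1]` and `q [β_j]`, and
`[m + 1] - q [m] = q^{-m}` is exactly the power of `q` needed to join the two partial sums in the
coefficient of `e_{s,n+1}`.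
-/

section QInt

variable {K : Type*} [Field K] {q : K}

lemma sub_inv_ne_zero_of_ne_one_of_ne_neg_one (hq0 : q ≠ 0) (hq1 : q ≠ 1) (hqm : q ≠ -1) :
    q - q⁻¹ ≠ 0 := by
  intro h
  have : (q - 1) * (q + 1) = 0 := by
    field_simp at h
    linear_combination h
  rcases mul_eq_zero.mp this with h | h
  · exact hq1 (sub_eq_zero.mp h)
  · exact hqm (eq_neg_of_add_eq_zero_left h)

lemma qint_add_one (hq0 : q ≠ 0) (hd : q - q⁻¹ ≠ 0) (m : ℤ) :
    qint q (m + 1) = q * qint q m + q ^ (-m) := by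
  rw [← sub_eq_iff_eq_add']
  calc qint q (m + 1) - q * qint q m = q ^ (-m) * ((q - q⁻¹) / (q - q⁻¹)) := by
        unfold qint
        rw [neg_add, zpow_add₀ hq0, zpow_add₀ hq0, zpow_one, zpow_neg_one]
        ring
    _ = q ^ (-m) := by rw [div_self hd, mul_one]

@[simp] lemma qint_zero : qint q 0 = (0 : K) := by simp [qint]

lemma sum_thq_mul_qint (hq0 : q ≠ 0) (n : ℕ) (β : ℕ → ℤ) :
    ∑ i ∈ Icc 1 n, thq q n β i * qint q (β i) = qint q (∑ i ∈ Icc 1 n, β i) := by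
  set g : ℕ → K := fun k => q ^ (∑ i ∈ Ico k (n + 1), β i - ∑ i ∈ Ico 1 k, β i)
  have hterm : ∀ i ∈ Ico 1 (n + 1),
      thq q n β i * qint q (β i) = -(g (i + 1) - g i) / (q - q⁻¹) := by
    intro i hi
    obtain ⟨hi1, hin⟩ := mem_Ico.mp hi
    have hsplit : ∑ k ∈ Ico i (n + 1), β k = β i + ∑ k ∈ Icc (i + 1) n, β k := by
      rw [sum_eq_sum_Ico_succ_bot hin, Ico_add_one_right_eq_Icc]
    simp only [g, qint, thq]
    rw [neg_sub, mul_div_assoc', mul_sub, ← zpow_add₀ hq0, ← zpow_add₀ hq0, hsplit,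
      sum_Ico_succ_top hi1, Ico_add_one_right_eq_Icc]
    ring_nf
  rw [← Ico_add_one_right_eq_Icc, sum_congr rfl hterm, ← sum_div, sum_neg_distrib,
    sum_Ico_sub g (by omega)]
  simp only [g, qint, Ico_self, sum_empty]
  ring_nf

end QInt

lemma sum_Icc_add_one_split {M : Type*} [AddCommMonoid M] (f : ℕ → M) {s j n : ℕ}
    (hsj : s < j) (hjn : j ≤ n) :
    ∑ i ∈ Icc (s + 1) n, f i = ∑ i ∈ Ioo s j, f i + f j + ∑ i ∈ Icc (j + 1) n, f i := by
  rw [Icc_add_one_left_eq_Ioc, Icc_add_one_left_eq_Ioc, ← sum_Ioc_consecutive f hsj.le hjn,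
    ← Ioo_insert_right hsj, sum_insert (by simp), add_comm (f j)]

@[simp] lemma sum_eps (A : Finset ℕ) (i : ℕ) : ∑ k ∈ A, eps i k = if i ∈ A then 1 else 0 := by
  simp [eps]

lemma add_eps_nonneg {A : Finset ℕ} {β : ℕ → ℤ} (hβ : ∀ k ∈ A, 0 ≤ β k) (i : ℕ) :
    ∀ k ∈ A, 0 ≤ (β + eps i) k := by
  intro k hk
  have := hβ k hk
  simp only [Pi.add_apply, eps]
  split_ifs <;> omega

lemma add_eps_sub_eps_nonneg {A : Finset ℕ} {β : ℕ → ℤ} (hβ : ∀ k ∈ A, 0 ≤ β k) {j : ℕ}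
    (hj : 0 < β j) (i : ℕ) : ∀ k ∈ A, 0 ≤ (β + eps i - eps j) k := by
  intro k hk
  have := hβ k hk
  simp only [Pi.sub_apply, Pi.add_apply, eps]
  split_ifs <;> subst_vars <;> omega

theorem qbracket_e_s_nplus1 {K V : Type*} [Field K] [AddCommGroup V] [Module K V]
    (q : K) (hq0 : q ≠ 0) (hq1 : q ≠ 1) (hqm : q ≠ -1) (n : ℕ)
    (X : (ℕ → ℤ) → V)
    (hX0 : ∀ β : ℕ → ℤ, (∃ k ∈ Finset.Icc 1 n, β k < 0) → X β = 0)
    (E : ℕ → ℕ → Module.End K V) (En1 : ℕ → Module.End K V)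
    (hE : ∀ s j, 1 ≤ s → s < j → j ≤ n → ∀ β : ℕ → ℤ, (∀ k ∈ Finset.Icc 1 n, 0 ≤ β k) →
      E s j (X β) = (q ^ (-(∑ i ∈ Finset.Ioo s j, β i)) * qint q (β s + 1)) •
        X (β + eps s - eps j))
    (hEn1 : ∀ s, 1 ≤ s → s ≤ n → ∀ β : ℕ → ℤ, (∀ k ∈ Finset.Icc 1 n, 0 ≤ β k) →
      En1 s (X β) = (q ^ (-(∑ i ∈ Finset.Icc (s + 1) n, β i)) * qint q (β s + 1) *
          ∑ i ∈ Finset.Icc 1 n, thq q n β i * qint q (β i)) • X (β + eps s)) :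
    ∀ s j, 1 ≤ s → s < j → j ≤ n → ∀ β : ℕ → ℤ, (∀ k ∈ Finset.Icc 1 n, 0 ≤ β k) →
      En1 s (X β) = (E s j * En1 j - q • (En1 j * E s j)) (X β) := by
  intro s j hs hsj hjn β hβ
  simp only [sum_thq_mul_qint hq0] at hEn1
  have hj : j ∈ Icc 1 n := mem_Icc.mpr ⟨by omega, hjn⟩
  have h_first : (E s j * En1 j) (X β) = (q ^ (-∑ i ∈ Icc (j + 1) n, β i) * qint q (β j + 1) *
      qint q (∑ i ∈ Icc 1 n, β i) * (q ^ (-∑ i ∈ Ioo s j, β i) * qint q (β s + 1))) •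
      X (β + eps s) := by
    rw [Module.End.mul_apply, hEn1 j (by omega) hjn β hβ, map_smul,
      hE s j hs hsj hjn _ (add_eps_nonneg hβ j), smul_smul, add_sub_right_comm,
      add_sub_cancel_right]
    simp [eps, sum_add_distrib, hsj.ne]
  have h_second : (En1 j * E s j) (X β) = (q ^ (-∑ i ∈ Ioo s j, β i) * qint q (β s + 1) *
      (q ^ (-∑ i ∈ Icc (j + 1) n, β i) * qint q (β j) * qint q (∑ i ∈ Icc 1 n, β i))) •
      X (β + eps s) := by
    rw [Module.End.mul_apply, hE s j hs hsj hjn β hβ, map_smul]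
    rcases (hβ j hj).eq_or_lt with hj0 | hj0
    · rw [hX0 _ ⟨j, hj, by simp [eps, hsj.ne', ← hj0]⟩, ← hj0]
      simp
    rw [hEn1 j (by omega) hjn _ (add_eps_sub_eps_nonneg hβ hj0 s), smul_smul, sub_add_cancel]
    simp [eps, sum_add_distrib, sum_sub_distrib, hsj.ne', hj, hs, hsj.asymm, show s ≤ n by omega]
  rw [LinearMap.sub_apply, LinearMap.smul_apply, h_first, h_second, hEn1 s hs (by omega) β hβ,
    smul_smul, ← sub_smul, sum_Icc_add_one_split β hsj hjn, neg_add, neg_add, zpow_add₀ hq0,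
    zpow_add₀ hq0, qint_add_one hq0 (sub_inv_ne_zero_of_ne_one_of_ne_neg_one hq0 hq1 hqm) (β j)]
  congr 1
  ring
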